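/- For u on the unit circle with u ≠ -1, the determinant of the Hermitian matrix H_u (as above, with s = Re u) vanishes if and only if s = 1/4. -/

import Mathlib

noncomputable section

/-- The value f(s,t) = -1 - s + 4s² + i(-1+4s)t. -/
def fH (s t : ℝ) : ℂ := ((-1 - s + 4*s^2 : ℝ) : ℂ) + Complex.I * (((-1 + 4*s)*t : ℝ) : ℂ)

/-- The Hermitian matrix H_u, where s = Re u and t = Im u. -/
def Hmat (u : ℂ) : Matrix (Fin 4) (Fin 4) ℂ :=
  !![((-2 + 4*u.re : ℝ) : ℂ), fH u.re u.im, fH u.re u.im, fH u.re u.im;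
     (starRingEnd ℂ) (fH u.re u.im), ((-2 + 4*u.re : ℝ) : ℂ), -1, -1;
     (starRingEnd ℂ) (fH u.re u.im), -1, ((-2 + 4*u.re : ℝ) : ℂ), -1;
     (starRingEnd ℂ) (fH u.re u.im), -1, -1, ((-2 + 4*u.re : ℝ) : ℂ)]

set_option maxHeartbeats 1000000 in
/-- for u on the unit circle with u ≠ -1, det H_u = 0 iff Re u = 1/4. -/
theorem det_Hu_eq_zero_iff (u : ℂ) (hu : ‖u‖ = 1) (hum1 : u ≠ -1) :
    (Hmat u).det = 0 ↔ u.re = 1/4 := by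
  have hn : Complex.normSq u = 1 := by
    rw [← Complex.sq_norm, hu]; norm_num
  have ht : u.im^2 = 1 - u.re^2 := by
    have h : u.re * u.re + u.im * u.im = 1 := by
      simpa [Complex.normSq_apply] using hn
    nlinarith [h]
  have hsne : u.re ≠ -1 := by
    intro hsm
    apply hum1
    have ht0 : u.im = 0 := by
      have h2 : u.im^2 = 0 := by rw [ht, hsm]; ring
      exact pow_eq_zero_iff (by norm_num) |>.mp h2
    apply Complex.ext <;> simp [hsm, ht0]
  have htC : ((u.im : ℂ))^2 = 1 - ((u.re : ℂ))^2 := by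
    exact_mod_cast congrArg (Complex.ofReal ·) ht
  have hdet : (Hmat u).det = ((-128*(u.re-1/4)^3*(u.re+1) : ℝ) : ℂ) := by
    simp [Hmat, fH, Matrix.det_succ_row_zero, Fin.sum_univ_succ, Fin.succAbove,
      map_add, map_mul, map_ofNat, Complex.conj_ofReal, Complex.conj_I,
      show (Fin.castSucc 2 : Fin 4) = 2 from rfl, show (Fin.succ 2 : Fin 4) = 3 from rfl,
      show ((1 : Fin 4) < 3) = True from by decide,
      Matrix.cons_val_two, Matrix.cons_val_three, Matrix.vecHead, Matrix.vecTail]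
    linear_combination ((-3:ℂ) + 48*(u.re:ℂ) - 288*(u.re:ℂ)^2 + 768*(u.re:ℂ)^3 - 768*(u.re:ℂ)^4) * htC +
      (3*(u.im:ℂ)^2 - 48*(u.re:ℂ)*(u.im:ℂ)^2 + 288*(u.re:ℂ)^2*(u.im:ℂ)^2 - 768*(u.re:ℂ)^3*(u.im:ℂ)^2 + 768*(u.re:ℂ)^4*(u.im:ℂ)^2) * Complex.I_sq
  rw [hdet, Complex.ofReal_eq_zero]
  constructor
  · intro h
    have hsp1 : u.re + 1 ≠ 0 := fun hc => hsne (by linarith)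
    have h3 : (u.re - 1/4)^3 = 0 := by
      rcases mul_eq_zero.mp h with h1 | h2
      · rcases mul_eq_zero.mp h1 with h1a | h1b
        · norm_num at h1a
        · exact h1b
      · exact absurd h2 hsp1
    have h4 := pow_eq_zero_iff (by norm_num : (3:ℕ) ≠ 0) |>.mp h3
    linarith [sub_eq_zero.mp h4]
  · intro h; rw [h]; ring

end
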